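/- Let R⁺ be the positive roots of type C_n in ℝ^n. For 1 ≤ i < j ≤ n, the unordered pairs {β, γ} ⊆ R⁺ with β + γ = ε_i + ε_j are exactly: {ε_j − ε_k, ε_i + ε_k} for j < k ≤ n; {ε_j + ε_l, ε_i − ε_l} for i < l ≤ n with l ≠ j (where ε_j + ε_l denotes ε_{min(j,l)} + ε_{max(j,l)}); and {2ε_j, ε_i − ε_j}. -/

import Mathlib

/-!
Sum the coordinates: `ε_a - ε_b` gives `0`, while `ε_a + ε_b` and `2ε_a` give `2` and have
nonnegative coordinates. As `ε_i + ε_j` gives `2`, exactly one of `β, γ` is some `ε_a - ε_b`,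
and the other is `ε_i + ε_j - ε_a + ε_b`. Nonnegativity of its `a`-th coordinate forces
`a ∈ {i, j}`, which leaves the three families (`a = j`; `a = i, b ≠ j`; `a = i, b = j`).
-/

/-- The positive roots of type `C_n` inside `ℝ^n`:
`{ε_i ± ε_j : i < j} ∪ {2ε_i}`. -/
def posRootsC (n : ℕ) : Set (Fin n → ℝ) :=
  {x | (∃ i j : Fin n, i < j ∧
        (x = Pi.single i 1 - Pi.single j 1 ∨ x = Pi.single i 1 + Pi.single j 1)) ∨
      ∃ i : Fin n, x = (2 : ℝ) • (Pi.single i 1 : Fin n → ℝ)}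

section

variable {ι M R : Type*}

theorem Pi.single_min_add_single_max [LinearOrder ι] [AddCommMonoid M] (j l : ι) (m : M) :
    (Pi.single (min j l) m + Pi.single (max j l) m : ι → M) = Pi.single j m + Pi.single l m := by
  rcases le_total j l with h | h
  · rw [min_eq_left h, max_eq_right h]
  · rw [min_eq_right h, max_eq_left h, add_comm]

theorem eq_single_add_single_of_single_sub_single_add_eq [DecidableEq ι] [Ring R] [PartialOrder R]
    [IsStrictOrderedRing R] {a b i j : ι} (hab : a ≠ b) {γ : ι → R} (hγ : 0 ≤ γ)
    (h : Pi.single a 1 - Pi.single b 1 + γ = Pi.single i 1 + Pi.single j 1) :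
    (a = i ∧ γ = Pi.single j 1 + Pi.single b 1) ∨ (a = j ∧ γ = Pi.single i 1 + Pi.single b 1) := by
  have hγ_eq : γ = Pi.single i 1 + Pi.single j 1 - Pi.single a 1 + Pi.single b 1 := by
    rw [← h]; abel
  have ha : a = i ∨ a = j := by
    by_contra! hne
    exact (hγ a).not_gt (by simp [hγ_eq, hab, hne.1, hne.2])
  rcases ha with rfl | rfl
  · exact Or.inl ⟨rfl, by rw [hγ_eq]; abel⟩
  · exact Or.inr ⟨rfl, by rw [hγ_eq]; abel⟩

end

variable {n : ℕ}

theorem posRootsC_cases {β : Fin n → ℝ} (hβ : β ∈ posRootsC n) :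
    (∃ a b : Fin n, a < b ∧ β = Pi.single a 1 - Pi.single b 1) ∨ (0 ≤ β ∧ ∑ x, β x = 2) := by
  rcases hβ with ⟨a, b, hab, rfl | rfl⟩ | ⟨a, rfl⟩
  · exact Or.inl ⟨a, b, hab, rfl⟩
  · refine Or.inr ⟨?_, ?_⟩
    · intro x
      simp only [Pi.add_apply, Pi.zero_apply, Pi.single_apply]
      positivity
    · norm_num [Finset.sum_add_distrib]
  · refine Or.inr ⟨?_, ?_⟩
    · intro x
      simp only [Pi.smul_apply, Pi.zero_apply, Pi.single_apply, smul_eq_mul]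
      positivity
    · simp [← Finset.mul_sum]

theorem decompositions_of_single_sub_single_add_eq {a b i j : Fin n} (hab : a < b)
    {β γ : Fin n → ℝ} (hβ : β = Pi.single a 1 - Pi.single b 1) (hγ : 0 ≤ γ)
    (h : β + γ = Pi.single i 1 + Pi.single j 1) :
    (∃ k, j < k ∧ β = Pi.single j 1 - Pi.single k 1 ∧ γ = Pi.single i 1 + Pi.single k 1) ∨
      (∃ l, i < l ∧ l ≠ j ∧ β = Pi.single i 1 - Pi.single l 1 ∧
        γ = Pi.single (min j l) 1 + Pi.single (max j l) 1) ∨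
      (β = Pi.single i 1 - Pi.single j 1 ∧ γ = (2 : ℝ) • (Pi.single j 1 : Fin n → ℝ)) := by
  subst hβ
  rcases eq_single_add_single_of_single_sub_single_add_eq hab.ne hγ h with
    ⟨rfl, rfl⟩ | ⟨rfl, rfl⟩
  · rcases eq_or_ne b j with rfl | hbj
    · exact Or.inr (Or.inr ⟨rfl, (two_smul ℝ _).symm⟩)
    · exact Or.inr (Or.inl ⟨b, hab, hbj, rfl, (Pi.single_min_add_single_max j b 1).symm⟩)
  · exact Or.inl ⟨b, hab, rfl, rfl⟩

theorem typeC_decompositions_of_add_general (n : ℕ) (i j : Fin n)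
    (β γ : Fin n → ℝ) (hβ : β ∈ posRootsC n) (hγ : γ ∈ posRootsC n) :
    β + γ = Pi.single i 1 + Pi.single j 1 ↔
      ((∃ k : Fin n, j < k ∧
          ((β = Pi.single j 1 - Pi.single k 1 ∧ γ = Pi.single i 1 + Pi.single k 1) ∨
           (β = Pi.single i 1 + Pi.single k 1 ∧ γ = Pi.single j 1 - Pi.single k 1))) ∨
       (∃ l : Fin n, i < l ∧ l ≠ j ∧
          ((β = Pi.single (min j l) 1 + Pi.single (max j l) 1 ∧ γ = Pi.single i 1 - Pi.single l 1) ∨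
           (β = Pi.single i 1 - Pi.single l 1 ∧ γ = Pi.single (min j l) 1 + Pi.single (max j l) 1))) ∨
       ((β = (2 : ℝ) • (Pi.single j 1 : Fin n → ℝ) ∧ γ = Pi.single i 1 - Pi.single j 1) ∨
        (β = Pi.single i 1 - Pi.single j 1 ∧ γ = (2 : ℝ) • (Pi.single j 1 : Fin n → ℝ)))) := by
  constructor
  · intro h
    have hsum : ∑ x, β x + ∑ x, γ x = 2 := by
      simpa [Finset.sum_add_distrib, one_add_one_eq_two] using
        congrArg (fun v : Fin n → ℝ => ∑ x, v x) h
    rcases posRootsC_cases hβ with ⟨a, b, hab, hβ⟩ | ⟨hβ₀, hβs⟩ <;>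
      rcases posRootsC_cases hγ with ⟨c, d, hcd, hγ⟩ | ⟨hγ₀, hγs⟩
    · simp [hβ, hγ] at hsum
    · rcases decompositions_of_single_sub_single_add_eq hab hβ hγ₀ h with
        ⟨k, hk, hβ, hγ⟩ | ⟨l, hl, hlj, hβ, hγ⟩ | ⟨hβ, hγ⟩
      exacts [Or.inl ⟨k, hk, Or.inl ⟨hβ, hγ⟩⟩, Or.inr (Or.inl ⟨l, hl, hlj, Or.inr ⟨hβ, hγ⟩⟩),
        Or.inr (Or.inr (Or.inr ⟨hβ, hγ⟩))]
    · rcases decompositions_of_single_sub_single_add_eq hcd hγ hβ₀ ((add_comm _ _).trans h) with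
        ⟨k, hk, hγ, hβ⟩ | ⟨l, hl, hlj, hγ, hβ⟩ | ⟨hγ, hβ⟩
      exacts [Or.inl ⟨k, hk, Or.inr ⟨hβ, hγ⟩⟩, Or.inr (Or.inl ⟨l, hl, hlj, Or.inl ⟨hβ, hγ⟩⟩),
        Or.inr (Or.inr (Or.inl ⟨hβ, hγ⟩))]
    · rw [hβs, hγs] at hsum
      norm_num at hsum
  · simp only [Pi.single_min_add_single_max]
    rintro (⟨k, -, ⟨rfl, rfl⟩ | ⟨rfl, rfl⟩⟩ | ⟨l, -, -, ⟨rfl, rfl⟩ | ⟨rfl, rfl⟩⟩ |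
      ⟨rfl, rfl⟩ | ⟨rfl, rfl⟩) <;> module

/-- For `i < j`, the unordered pairs `{β, γ}` of positive roots of type `C_n` with
`β + γ = ε_i + ε_j` are exactly: `{ε_j - ε_k, ε_i + ε_k}` for `j < k ≤ n`;
`{ε_j + ε_l, ε_i - ε_l}` for `i < l ≤ n`, `l ≠ j` (with `ε_j + ε_l` meaning
`ε_{min(j,l)} + ε_{max(j,l)}`); and `{2ε_j, ε_i - ε_j}`. -/
theorem typeC_decompositions_of_add (n : ℕ) (i j : Fin n) (hij : i < j)
    (β γ : Fin n → ℝ) (hβ : β ∈ posRootsC n) (hγ : γ ∈ posRootsC n) :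
    β + γ = Pi.single i 1 + Pi.single j 1 ↔
      ((∃ k : Fin n, j < k ∧
          ((β = Pi.single j 1 - Pi.single k 1 ∧ γ = Pi.single i 1 + Pi.single k 1) ∨
           (β = Pi.single i 1 + Pi.single k 1 ∧ γ = Pi.single j 1 - Pi.single k 1))) ∨
       (∃ l : Fin n, i < l ∧ l ≠ j ∧
          ((β = Pi.single (min j l) 1 + Pi.single (max j l) 1 ∧ γ = Pi.single i 1 - Pi.single l 1) ∨
           (β = Pi.single i 1 - Pi.single l 1 ∧ γ = Pi.single (min j l) 1 + Pi.single (max j l) 1))) ∨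
       ((β = (2 : ℝ) • (Pi.single j 1 : Fin n → ℝ) ∧ γ = Pi.single i 1 - Pi.single j 1) ∨
        (β = Pi.single i 1 - Pi.single j 1 ∧ γ = (2 : ℝ) • (Pi.single j 1 : Fin n → ℝ)))) :=
  typeC_decompositions_of_add_general n i j β γ hβ hγ
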